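/- If p is directly simulated by q (p ⊑_di q) in a complete Büchi automaton A, then for every word α and every level i, if both (p,i) and (q,i) are vertices of the run DAG of A over α, then rank(p,i) ≤ rank(q,i). -/
import Mathlib


open scoped Classical

universe u v

/-- A (nondeterministic) Büchi automaton. -/
structure BA (A : Type u) (Q : Type v) where
  δ : Q → A → Set Q
  I : Set Q
  F : Set Q

namespace BA

variable {A : Type u} {Q : Type v}

/-- Completeness: every state has a successor on every symbol. -/
def Complete (M : BA A Q) : Prop := ∀ q a, (M.δ q a).Nonempty

/-- `ρ` is a run of `M` over the infinite word `α` (from `ρ 0`). -/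
def IsRun (M : BA A Q) (α : ℕ → A) (ρ : ℕ → Q) : Prop :=
  ∀ i, ρ (i + 1) ∈ M.δ (ρ i) (α i)

/-- `M` accepts `α` from state `q` (some run from `q` visits `F` infinitely often). -/
def AcceptsFrom (M : BA A Q) (q : Q) (α : ℕ → A) : Prop :=
  ∃ ρ, ρ 0 = q ∧ M.IsRun α ρ ∧ ∀ n, ∃ m ≥ n, ρ m ∈ M.F

def LangFrom (M : BA A Q) (q : Q) : Set (ℕ → A) := {α | M.AcceptsFrom q α}

def Lang (M : BA A Q) : Set (ℕ → A) := {α | ∃ q ∈ M.I, M.AcceptsFrom q α}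

/-! ### Simulation games -/

/-- A (positional, total) Duplicator strategy: given Duplicator's current state and
Spoiler's transition `p →a p'`, pick Duplicator's next state, which must be an
`a`-successor of Duplicator's current state. -/
def IsStrategy (M : BA A Q) (σ : Q → Q → A → Q → Q) : Prop :=
  ∀ r p a p', σ r p a p' ∈ M.δ r a

/-- The trace produced by Duplicator following strategy `σ` from `r` against
Spoiler's trace `ρ` over the word `α`. -/
def play (σ : Q → Q → A → Q → Q) (r : Q) (α : ℕ → A) (ρ : ℕ → Q) : ℕ → Q
  | 0 => r
  | i + 1 => σ (play σ r α ρ i) (ρ i) (α i) (ρ (i + 1))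

/-- Direct-simulation winning condition. -/
def CondDi (M : BA A Q) (ρ τ : ℕ → Q) : Prop := ∀ i, ρ i ∈ M.F → τ i ∈ M.F

/-- Delayed-simulation winning condition. -/
def CondDe (M : BA A Q) (ρ τ : ℕ → Q) : Prop := ∀ i, ρ i ∈ M.F → ∃ k ≥ i, τ k ∈ M.F

/-- Fair-simulation winning condition. -/
def CondF (M : BA A Q) (ρ τ : ℕ → Q) : Prop :=
  (∀ n, ∃ m ≥ n, ρ m ∈ M.F) → (∀ n, ∃ m ≥ n, τ m ∈ M.F)

/-- `σ` is winning for Duplicator from configuration `(p, q)` wrt condition `C`. -/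
def WinsFrom (M : BA A Q) (C : (ℕ → Q) → (ℕ → Q) → Prop)
    (σ : Q → Q → A → Q → Q) (p q : Q) : Prop :=
  ∀ α ρ, ρ 0 = p → M.IsRun α ρ → C ρ (play σ q α ρ)

/-- The (maximal) simulation relation given by winning condition `C`. -/
def Sim (M : BA A Q) (C : (ℕ → Q) → (ℕ → Q) → Prop) (p q : Q) : Prop :=
  ∃ σ, M.IsStrategy σ ∧ M.WinsFrom C σ p q

def DiSim (M : BA A Q) : Q → Q → Prop := M.Sim M.CondDi
def DeSim (M : BA A Q) : Q → Q → Prop := M.Sim M.CondDe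
def FairSim (M : BA A Q) : Q → Q → Prop := M.Sim M.CondF

/-! ### Run DAGs and ranks -/

/-- Vertices of the run DAG of `M` over `α`. -/
def DagV (M : BA A Q) (α : ℕ → A) : Set (Q × ℕ) :=
  {v | ∃ ρ, ρ 0 ∈ M.I ∧ M.IsRun α ρ ∧ ρ v.2 = v.1}

/-- The edge relation of the run DAG. -/
def dagStep (M : BA A Q) (α : ℕ → A) (u v : Q × ℕ) : Prop :=
  v.2 = u.2 + 1 ∧ v.1 ∈ M.δ u.1 (α u.2)

/-- Reachability inside a sub-DAG `G`. -/
def reachIn (M : BA A Q) (α : ℕ → A) (G : Set (Q × ℕ)) : Q × ℕ → Q × ℕ → Prop :=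
  Relation.ReflTransGen (fun u v => u ∈ G ∧ v ∈ G ∧ M.dagStep α u v)

/-- A vertex of `G` is finite if it reaches only finitely many vertices inside `G`. -/
def FiniteIn (M : BA A Q) (α : ℕ → A) (G : Set (Q × ℕ)) (v : Q × ℕ) : Prop :=
  v ∈ G ∧ {u | M.reachIn α G v u}.Finite

/-- A vertex of `G` is endangered if it reaches no accepting vertex inside `G`. -/
def EndangeredIn (M : BA A Q) (α : ℕ → A) (G : Set (Q × ℕ)) (v : Q × ℕ) : Prop :=
  v ∈ G ∧ ∀ u, M.reachIn α G v u → u.1 ∉ M.F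

/-- The decreasing sequence of DAGs of the ranking procedure: at even steps remove
the finite vertices, at odd steps remove the endangered vertices. -/
def dagSeq (M : BA A Q) (α : ℕ → A) : ℕ → Set (Q × ℕ)
  | 0 => M.DagV α
  | j + 1 =>
      if Even j then M.dagSeq α j \ {v | M.FiniteIn α (M.dagSeq α j) v}
      else M.dagSeq α j \ {v | M.EndangeredIn α (M.dagSeq α j) v}

/-- The rank of a vertex: the step `j ≤ 2n` at which it is removed in the ranking
procedure, and `ω` (i.e. `⊤`) if it is never removed within `2n + 1` steps. -/
noncomputable def rank (M : BA A Q) (α : ℕ → A) (n : ℕ) (v : Q × ℕ) : ℕ∞ :=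
  if ∃ j ≤ 2 * n, v ∈ M.dagSeq α j ∧ v ∉ M.dagSeq α (j + 1) then
    ((sInf {j | v ∈ M.dagSeq α j ∧ v ∉ M.dagSeq α (j + 1)} : ℕ) : ℕ∞)
  else ⊤

end BA

/-! ### Schewe's rank-based complementation -/

/-- A macrostate `(S, O, f, i)` of the rank-based construction. -/
structure Macro (Q : Type v) where
  S : Set Q
  O : Set Q
  f : Q → ℕ
  i : ℕ

/-- The rank of a level ranking `f`: its maximal value. -/
def rankOf {Q : Type v} [Fintype Q] (f : Q → ℕ) : ℕ := Finset.univ.sup f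

/-- The smallest even number `≥ k`. -/
def rondNat (k : ℕ) : ℕ := if Even k then k else k + 1

/-- The smallest even number `≥ x`, with `⌈ω⌉ = ω`. -/
def rondE (x : ℕ∞) : ℕ∞ := WithTop.map rondNat x

namespace BA

variable {A : Type u} {Q : Type v}

/-- A level ranking: ranks bounded by `2n`, accepting states get even ranks. -/
def LevelRanking (M : BA A Q) (n : ℕ) (f : Q → ℕ) : Prop :=
  (∀ q, f q ≤ 2 * n) ∧ ∀ q ∈ M.F, Even (f q)

/-- `f` is `S`-tight. -/
def STight [Fintype Q] (M : BA A Q) (n : ℕ) (S : Set Q) (f : Q → ℕ) : Prop :=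
  M.LevelRanking n f ∧ Odd (rankOf f) ∧
  (∀ m, Odd m → m ≤ rankOf f → ∃ s ∈ S, f s = m) ∧
  ∀ q ∉ S, f q = 0

/-- Successors of a set of states. -/
def δSet (M : BA A Q) (S : Set Q) (a : A) : Set Q := ⋃ q ∈ S, M.δ q a

/-- Validity of a macrostate, i.e., membership in `Q₂`. -/
def Q2Valid [Fintype Q] (M : BA A Q) (n : ℕ) (m : Macro Q) : Prop :=
  M.STight n m.S m.f ∧ m.O ⊆ m.S ∩ {q | m.f q = m.i} ∧ Even m.i ∧ m.i + 2 ≤ 2 * n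

/-- The `δ₃` successor condition of the rank-based construction, where `cl` is the
closure operator applied to the successor set (use `cl = id` for the plain
construction). -/
def macroSucc [Fintype Q] (M : BA A Q) (cl : Set Q → Set Q) (m m' : Macro Q)
    (a : A) : Prop :=
  m'.S = cl (M.δSet m.S a) ∧
  (∀ q ∈ m.S, ∀ q' ∈ M.δ q a, m'.f q' ≤ m.f q) ∧
  rankOf m'.f = rankOf m.f ∧
  ((m.O = ∅ ∧ m'.i = (m.i + 2) % (rankOf m'.f + 1) ∧ m'.O = {q | m'.f q = m'.i}) ∨
   (m.O ≠ ∅ ∧ m'.i = m.i ∧ m'.O = M.δSet m.O a ∩ {q | m'.f q = m'.i}))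

/-- Schewe's rank-based complement construction, parameterized by a predicate
`keep` selecting which macrostates of `Q₂` are kept (use `fun _ => True` for the
plain construction) and a closure `cl` applied to successor sets (use `id` for
the plain construction). -/
def schewe [Fintype Q] (M : BA A Q) (n : ℕ) (keep : Macro Q → Prop)
    (cl : Set Q → Set Q) : BA A (Set Q ⊕ Macro Q) where
  δ := fun s a =>
    match s with
    | Sum.inl S =>
        {Sum.inl (cl (M.δSet S a))} ∪
        {s' | ∃ m : Macro Q, s' = Sum.inr m ∧ m.S = cl (M.δSet S a) ∧ m.O = ∅ ∧
              m.i = 0 ∧ M.Q2Valid n m ∧ keep m}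
    | Sum.inr m =>
        {s' | ∃ m' : Macro Q, s' = Sum.inr m' ∧ M.macroSucc cl m m' a ∧
              M.Q2Valid n m' ∧ keep m'}
  I := {Sum.inl M.I}
  F := {Sum.inl (∅ : Set Q)} ∪
       {s | ∃ m : Macro Q, s = Sum.inr m ∧ m.O = ∅ ∧ M.Q2Valid n m ∧ keep m}

/-! ### Finite paths, quotients, added transitions -/

/-- Finite path from `p` to `q` over the finite word `w`. -/
inductive Path (M : BA A Q) : Q → List A → Q → Prop
  | nil (q : Q) : Path M q [] q
  | cons {p q r : Q} {a : A} {w : List A} :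
      q ∈ M.δ p a → Path M q w r → Path M p (a :: w) r

/-- Finite path from `p` to `q` over `w` that visits an accepting state. -/
inductive APath (M : BA A Q) : Q → List A → Q → Prop
  | here {p : Q} {w : List A} {q : Q} : p ∈ M.F → Path M p w q → APath M p w q
  | step {p q r : Q} {a : A} {w : List A} :
      q ∈ M.δ p a → APath M q w r → APath M p (a :: w) r

/-- The factor of the infinite word `α` between positions `i` (included) and
`j` (excluded). -/
def wordSeg (α : ℕ → A) (i j : ℕ) : List A := (List.range (j - i)).map fun m => α (i + m)

/-- `α` belongs to the ω-power `L^ω` of the language `L` of finite words. -/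
def InOmegaPow (L : Language A) (α : ℕ → A) : Prop :=
  ∃ t : ℕ → ℕ, t 0 = 0 ∧ StrictMono t ∧ ∀ k, wordSeg α (t k) (t (k + 1)) ∈ L

/-- The automaton `M` with the extra transition `r →a p` added. -/
def addTr (M : BA A Q) (r : Q) (a : A) (p : Q) : BA A Q where
  δ := fun s b => M.δ s b ∪ {x | s = r ∧ b = a ∧ x = p}
  I := M.I
  F := M.F

/-- The quotient automaton of `M` by the equivalence (setoid) `s`. -/
def quotBA (M : BA A Q) (s : Setoid Q) : BA A (Quotient s) where
  δ := fun c a => {c' | ∃ u u', Quotient.mk s u = c ∧ Quotient.mk s u' = c' ∧ u' ∈ M.δ u a}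
  I := {c | ∃ u ∈ M.I, Quotient.mk s u = c}
  F := {c | ∃ u ∈ M.F, Quotient.mk s u = c}

end BA

/-! ### Auxiliary lemmas for stmt3 -/

namespace BA

variable {A : Type u} {Q : Type v}

/-- From any state there is an infinite run over any word (by completeness). -/
lemma exists_run (M : BA A Q) (hM : M.Complete) (α : ℕ → A) (p : Q) :
    ∃ ρ : ℕ → Q, ρ 0 = p ∧ M.IsRun α ρ := by
  refine ⟨fun n => Nat.rec p (fun n pn => (hM pn (α n)).choose) n, rfl, fun i => ?_⟩
  exact (hM _ _).choose_spec

/-- Direct simulation preserves acceptance of the current state. -/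
lemma disim_F (M : BA A Q) (hM : M.Complete) (α : ℕ → A) {p q : Q}
    (h : M.DiSim p q) (hp : p ∈ M.F) : q ∈ M.F := by
  obtain ⟨σ, hσ, hw⟩ := h
  obtain ⟨ρ, h0, hr⟩ := M.exists_run hM α p
  have := hw α ρ h0 hr 0 (h0 ▸ hp)
  simpa [BA.play] using this

/-- Direct simulation can be continued along transitions. -/
lemma disim_step (M : BA A Q) {p q : Q} (h : M.DiSim p q) {a : A} {p' : Q}
    (hp' : p' ∈ M.δ p a) : ∃ q' ∈ M.δ q a, M.DiSim p' q' := by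
  obtain ⟨σ, hσ, hw⟩ := h
  refine ⟨σ q p a p', hσ q p a p', σ, hσ, ?_⟩
  intro α ρ h0 hr i hF
  set β : ℕ → A := fun n => Nat.casesOn n a (fun m => α m) with hβ
  set ρ' : ℕ → Q := fun n => Nat.casesOn n p (fun m => ρ m) with hρ'
  have hrun : M.IsRun β ρ' := by
    intro i
    cases i with
    | zero => simpa [ρ', β, h0] using hp'
    | succ m => simpa [ρ', β] using hr m
  have hplay : ∀ m, play σ q β ρ' (m + 1) = play σ (σ q p a p') α ρ m := by
    intro m
    induction m with
    | zero => simp [play, ρ', β, h0]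
    | succ m ih =>
        have hstep : play σ q β ρ' (m + 2) =
            σ (play σ q β ρ' (m + 1)) (ρ' (m + 1)) (β (m + 1)) (ρ' (m + 2)) := rfl
        rw [hstep, ih]
        simp [play, ρ', β]
  have := hw β ρ' rfl hrun (i + 1) (by simpa [ρ'] using hF)
  rwa [hplay] at this

/-- The run DAG is closed under successor steps. -/
lemma dagV_step (M : BA A Q) (hM : M.Complete) {α : ℕ → A} {v v' : Q × ℕ}
    (hv : v ∈ M.DagV α) (h1 : v'.2 = v.2 + 1) (h2 : v'.1 ∈ M.δ v.1 (α v.2)) :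
    v' ∈ M.DagV α := by
  obtain ⟨ρ, hI, hr, hlv⟩ := hv
  obtain ⟨τ, hτ0, hτr⟩ := M.exists_run hM (fun n => α (v.2 + 1 + n)) v'.1
  refine ⟨fun n => if n ≤ v.2 then ρ n else τ (n - (v.2 + 1)), by simp [hI], ?_, ?_⟩
  · intro i
    rcases lt_trichotomy i v.2 with hi | hi | hi
    · simp only [if_pos (le_of_lt hi), if_pos (Nat.succ_le_of_lt hi)]
      exact hr i
    · rw [hi]
      have e1 : (fun n => if n ≤ v.2 then ρ n else τ (n - (v.2 + 1))) (v.2 + 1) = τ 0 := by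
        simp
      have e2 : (fun n => if n ≤ v.2 then ρ n else τ (n - (v.2 + 1))) v.2 = ρ v.2 := by
        simp
      rw [e1, e2, hτ0, hlv]
      exact h2
    · have h3 : ¬ i ≤ v.2 := by omega
      have h4 : ¬ i + 1 ≤ v.2 := by omega
      simp only [if_neg h3, if_neg h4]
      have h6 : i + 1 - (v.2 + 1) = (i - (v.2 + 1)) + 1 := by omega
      rw [h6]
      have h7 : v.2 + 1 + (i - (v.2 + 1)) = i := by omega
      simpa [h7] using hτr (i - (v.2 + 1))
  · rw [h1]
    simp only [if_neg (by omega : ¬ v.2 + 1 ≤ v.2)]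
    simpa using hτ0

lemma dagSeq_succ_subset (M : BA A Q) (α : ℕ → A) (j : ℕ) :
    M.dagSeq α (j + 1) ⊆ M.dagSeq α j := by
  by_cases hje : Even j <;> simp [dagSeq, hje] <;> exact Set.diff_subset

/-- Each step of `reachIn` raises the level by one; mapping a reachable vertex
through a direct simulation. -/
lemma reach_map (M : BA A Q) (hM : M.Complete) (α : ℕ → A) (G : Set (Q × ℕ))
    (IH : ∀ i p q, M.DiSim p q → (p, i) ∈ G → (q, i) ∈ M.DagV α → (q, i) ∈ G)
    {i : ℕ} {p q : Q} (h : M.DiSim p q) (hq : (q, i) ∈ M.DagV α) :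
    ∀ u, M.reachIn α G (p, i) u →
      ∃ w, M.reachIn α G (q, i) w ∧ w.2 = u.2 ∧ M.DiSim u.1 w.1 ∧ w ∈ M.DagV α := by
  intro u hu
  induction hu with
  | refl => exact ⟨(q, i), Relation.ReflTransGen.refl, rfl, h, hq⟩
  | @tail b c hab hstep ih =>
    obtain ⟨w, hwreach, hw2, hwsim, hwdag⟩ := ih
    obtain ⟨hbG, hcG, hc2, hcδ⟩ := hstep
    obtain ⟨q'', hq''δ, hsim'⟩ := M.disim_step hwsim hcδ
    have hq''δ' : q'' ∈ M.δ w.1 (α w.2) := by rwa [hw2]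
    have hwdag' : (q'', w.2 + 1) ∈ M.DagV α :=
      M.dagV_step hM hwdag rfl hq''δ'
    have hwG : w ∈ G := by
      have hwd : (w.1, b.2) ∈ M.DagV α := by rw [← hw2]; simpa using hwdag
      have := IH b.2 b.1 w.1 hwsim (by simpa using hbG) hwd
      rw [← hw2] at this
      simpa using this
    have hw'G : (q'', w.2 + 1) ∈ G := by
      have h2 : w.2 + 1 = c.2 := by omega
      rw [h2]
      exact IH c.2 c.1 q'' hsim' (by simpa using hcG) (by rw [← h2]; exact hwdag')
    refine ⟨(q'', w.2 + 1), Relation.ReflTransGen.tail hwreach ⟨hwG, hw'G, rfl, hq''δ'⟩,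
      by simp; omega, hsim', hwdag'⟩

/-- Main invariant: vertices simulated by DAG vertices survive each stage. -/
lemma key_lemma (M : BA A Q) [Fintype Q] (hM : M.Complete) (α : ℕ → A) :
    ∀ j : ℕ, ∀ i p q, M.DiSim p q → (p, i) ∈ M.dagSeq α j → (q, i) ∈ M.DagV α →
      (q, i) ∈ M.dagSeq α j := by
  intro j
  induction j with
  | zero => intro i p q _ _ hq; exact hq
  | succ j IH =>
    intro i p q hpq hp hq
    set G := M.dagSeq α j with hG
    have hqG : ∀ i p q, M.DiSim p q → (p, i) ∈ G → (q, i) ∈ M.DagV α → (q, i) ∈ G := IH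
    by_cases hje : Even j
    · rw [show M.dagSeq α (j + 1) = G \ {v | M.FiniteIn α G v} by rw [hG]; simp [dagSeq, hje]] at hp ⊢
      obtain ⟨hpG, hpn⟩ := hp
      have hqGm : (q, i) ∈ G := IH i p q hpq hpG hq
      refine ⟨hqGm, fun hfin => hpn ⟨hpG, ?_⟩⟩
      obtain ⟨-, hfin⟩ := hfin
      obtain ⟨B, hB⟩ := (hfin.image Prod.snd).bddAbove
      refine Set.Finite.subset (Set.finite_univ.prod (Set.finite_Iic B)) ?_
      rintro u hu
      obtain ⟨w, hwreach, hw2, -, -⟩ :=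
        M.reach_map hM α G hqG hpq hq u hu
      exact ⟨trivial, hw2 ▸ hB ⟨w, hwreach, rfl⟩⟩
    · rw [show M.dagSeq α (j + 1) = G \ {v | M.EndangeredIn α G v} by rw [hG]; simp [dagSeq, hje]] at hp ⊢
      obtain ⟨hpG, hpn⟩ := hp
      have hqGm : (q, i) ∈ G := IH i p q hpq hpG hq
      refine ⟨hqGm, fun hend => ?_⟩
      apply hpn
      refine ⟨hpG, fun u hu huF => ?_⟩
      obtain ⟨w, hwreach, hw2, hwsim, -⟩ :=
        M.reach_map hM α G hqG hpq hq u hu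
      exact hend.2 w hwreach (M.disim_F hM α hwsim huF)

lemma exists_removal (M : BA A Q) (α : ℕ → A) (v : Q × ℕ) :
    ∀ m, v ∈ M.dagSeq α 0 → v ∉ M.dagSeq α (m + 1) →
      ∃ j ≤ m, v ∈ M.dagSeq α j ∧ v ∉ M.dagSeq α (j + 1) := by
  intro m
  induction m with
  | zero => intro h0 h1; exact ⟨0, le_refl 0, h0, h1⟩
  | succ m ih =>
    intro h0 h1
    by_cases hm : v ∈ M.dagSeq α (m + 1)
    · exact ⟨m + 1, le_refl _, hm, h1⟩
    · obtain ⟨j, hj, h⟩ := ih h0 hm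
      exact ⟨j, le_trans hj (Nat.le_succ m), h⟩

end BA

/-- direct simulation implies comparison of ranks in the run DAG. -/
theorem stmt3 {A : Type u} {Q : Type v} [Fintype Q] (M : BA A Q)
    (hM : M.Complete) (n : ℕ) (hn : n = Fintype.card Q)
    (p q : Q) (h : M.DiSim p q) :
    ∀ (α : ℕ → A) (i : ℕ), (p, i) ∈ M.DagV α → (q, i) ∈ M.DagV α →
      M.rank α n (p, i) ≤ M.rank α n (q, i) := by
  intro α i hp hq
  have key : ∀ j, (p, i) ∈ M.dagSeq α j → (q, i) ∈ M.dagSeq α j :=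
    fun j hj => M.key_lemma hM α j i p q h hj hq
  by_cases cq : ∃ j ≤ 2 * n, (q, i) ∈ M.dagSeq α j ∧ (q, i) ∉ M.dagSeq α (j + 1)
  · obtain ⟨j0, hj0le, hj0⟩ := cq
    set Sq : Set ℕ := {j | (q, i) ∈ M.dagSeq α j ∧ (q, i) ∉ M.dagSeq α (j + 1)} with hSq
    have hSqne : Sq.Nonempty := ⟨j0, hj0⟩
    have hjq_mem : sInf Sq ∈ Sq := Nat.sInf_mem hSqne
    have hjq_le : sInf Sq ≤ j0 := Nat.sInf_le hj0
    -- p is removed no later than q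
    have hpnot : (p, i) ∉ M.dagSeq α (sInf Sq + 1) := fun hpmem => hjq_mem.2 (key _ hpmem)
    obtain ⟨jp, hjple, hjp⟩ := M.exists_removal α (p, i) (sInf Sq) hp hpnot
    have cp : ∃ j ≤ 2 * n, (p, i) ∈ M.dagSeq α j ∧ (p, i) ∉ M.dagSeq α (j + 1) :=
      ⟨jp, le_trans (le_trans hjple hjq_le) hj0le, hjp⟩
    rw [BA.rank, if_pos cp, BA.rank, if_pos ⟨j0, hj0le, hj0⟩]
    have h1 : sInf {j | (p, i) ∈ M.dagSeq α j ∧ (p, i) ∉ M.dagSeq α (j + 1)} ≤ jp :=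
      Nat.sInf_le hjp
    exact_mod_cast le_trans h1 (le_trans hjple (le_refl _))
  · have hq' : M.rank α n (q, i) = ⊤ := by rw [BA.rank, if_neg cq]
    rw [hq']
    exact le_top
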